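/- Let {W_θ} be a family of unitaries on ℂ^D ⊗ ℂ^k depending differentiably on θ ∈ ℝ, let χ ∈ ℂ^k and ψ ∈ ℂ^D be unit vectors, W = W_{θ0}, Ẇ = (d/dθ)W_θ|_{θ0}, and assume: (i) W(ψ⊗χ) = ψ⊗χ; (ii) ⟨ψ⊗χ| W*Ẇ |ψ⊗χ⟩ = 0; (iii) for τ = Tr_u(Ẇ|ψ⊗χ⟩⟨ψ⊗χ|Ẇ*) and the transition operator T(ρ) = Tr_u(W(ρ⊗|χ⟩⟨χ|)W*) there is 0 ≤ a < 1 with Tr((1−|ψ⟩⟨ψ|) T^m(τ)) ≤ a^{2m} for all m ≥ 0. For each n, let Ψ_θ(n) = W_θ^(n)···W_θ^(1)(ψ⊗χ^⊗n), F(n) = 4(‖Ψ̇_{θ0}(n)‖² − |⟨Ψ_{θ0}(n),Ψ̇_{θ0}(n)⟩|²) the quantum Fisher information of this pure model at θ0. Let an adaptive measurement be given by orthonormal bases {e^[j]_i}_{i=1}^k of ℂ^k for each j (each possibly depending on the previous outcomes i_1,…,i_{j−1}), with output likelihood p_θ(i_1,…,i_n) = ‖K^[n]_{i_n}(θ)···K^[1]_{i_1}(θ)ψ‖²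 where K^[j]_i(θ) = ⟨e^[j]_i|W_θ|χ⟩, and classical Fisher information I(n) = Σ_{i_1,…,i_n: p_{θ0}>0} p_{θ0}(i_1,…,i_n)^{−1} ((d/dθ)p_θ(i_1,…,i_n)|_{θ0})². If the adaptive measurement, supplemented by a final projective measurement on ℂ^D, has total classical Fisher information at θ0 equal to F(n), then F(n) − I(n) ≤ 4/(1−a)² for all n. -/

import Mathlib

open scoped BigOperators Matrix Kronecker ComplexConjugate Classical
open Matrix

noncomputable section

/-- Inner product on `ι → ℂ`, conjugate-linear in the first argument. -/
def inn {ι : Type*} [Fintype ι] (v w : ι → ℂ) : ℂ := ∑ i, conj (v i) * w i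

/-- Squared norm on `ι → ℂ`. -/
def nsq {ι : Type*} [Fintype ι] (v : ι → ℂ) : ℝ := ∑ i, Complex.normSq (v i)

/-- Tensor product of two vectors. -/
def vtens {α β : Type*} (v : α → ℂ) (w : β → ℂ) : α × β → ℂ := fun p => v p.1 * w p.2

/-- `n`-fold tensor power of a vector. -/
def vpow {ι : Type*} (n : ℕ) (χ : ι → ℂ) : (Fin n → ι) → ℂ := fun g => ∏ j, χ (g j)

/-- Outer product `|v⟩⟨w|`. -/
def outer {α : Type*} (v w : α → ℂ) : Matrix α α ℂ := fun x y => v x * conj (w y)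

/-- Ampliation of an operator on system ⊗ (single noise unit) to system ⊗ (n noise units),
acting on the `j`-th noise unit. -/
def amp {α ι : Type*} [DecidableEq ι] (n : ℕ) (W : Matrix (α × ι) (α × ι) ℂ) (j : Fin n) :
    Matrix (α × (Fin n → ι)) (α × (Fin n → ι)) ℂ :=
  fun p q => if ∀ l, l ≠ j → p.2 l = q.2 l then W (p.1, p.2 j) (q.1, q.2 j) else 0

/-- The `n`-step unitary `W⁽ⁿ⁾ ⋯ W⁽²⁾ W⁽¹⁾`. -/
def steps {α ι : Type*} [Fintype α] [Fintype ι] [DecidableEq α] [DecidableEq ι]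
    (n : ℕ) (W : Matrix (α × ι) (α × ι) ℂ) :
    Matrix (α × (Fin n → ι)) (α × (Fin n → ι)) ℂ :=
  ((List.ofFn fun j : Fin n => amp n W j).reverse).prod

/-- Kraus operator `⟨e|W|χ⟩`. -/
def kraus {α ι : Type*} [Fintype ι] (W : Matrix (α × ι) (α × ι) ℂ) (e χ : ι → ℂ) :
    Matrix α α ℂ :=
  fun s t => ∑ u, ∑ v, conj (e u) * W (s, u) (t, v) * χ v

/-- `A (n-1) ⋯ A 1 A 0`. -/
def kprodFin {α : Type*} [Fintype α] [DecidableEq α] {n : ℕ} (A : Fin n → Matrix α α ℂ) :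
    Matrix α α ℂ :=
  ((List.ofFn A).reverse).prod

/-- Partial trace over the noise unit. -/
def ptraceNoise {α ι : Type*} [Fintype ι] (A : Matrix (α × ι) (α × ι) ℂ) : Matrix α α ℂ :=
  fun s t => ∑ u, A (s, u) (t, u)

/-- Transition operator `T(ρ) = Tr_u (W (ρ ⊗ |χ⟩⟨χ|) W*)`. -/
def tmap {α ι : Type*} [Fintype α] [Fintype ι] (W : Matrix (α × ι) (α × ι) ℂ) (χ : ι → ℂ)
    (ρ : Matrix α α ℂ) : Matrix α α ℂ :=
  ptraceNoise (W * (ρ ⊗ₖ outer χ χ) * Wᴴ)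

/-!
For an output record `g` let `v_g(θ) = K_{g_{n-1}}(θ) ⋯ K_{g_0}(θ) ψ` be the unnormalised
conditional system vector, so that `p(g) = ‖v_g‖²`. Stationarity makes `v_g(θ₀)` a multiple of
`ψ`, and then the final measurement of the system can add at most `4‖(1 - |ψ⟩⟨ψ|) v̇_g‖²` to the
Fisher information of `‖v_g‖²`; hence `F(n) - I(n) ≤ 4 ∑_g ‖(1 - |ψ⟩⟨ψ|) v̇_g‖²`.

By the Leibniz rule `v̇_g = ∑_m y_{g,m}`, where `y_{g,m}` has the `m`-th Kraus operator
differentiated. Summing `|y_{g,m}⟩⟨y_{g,m}|` over all records, last outcome first, every adaptive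
basis drops out and what remains is `T^{n-m-1}(τ)`, so `∑_g ‖(1 - |ψ⟩⟨ψ|) y_{g,m}‖² ≤ a^{2(n-m-1)}`.
Minkowski's inequality and the geometric series bound the total by `1/(1-a)²`.
-/

section InnerProduct

variable {ι : Type*} [Fintype ι]

lemma inn_eq_star_dotProduct (v w : ι → ℂ) : inn v w = star v ⬝ᵥ w := rfl

lemma inn_self (v : ι → ℂ) : inn v v = nsq v := by
  simp [inn, nsq, Complex.normSq_eq_conj_mul_self]

lemma nsq_smul (c : ℂ) (v : ι → ℂ) : nsq (c • v) = Complex.normSq c * nsq v := by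
  simp [nsq, Finset.mul_sum]

lemma inn_smul_left (c : ℂ) (v w : ι → ℂ) : inn (c • v) w = conj c * inn v w := by
  simp [inn_eq_star_dotProduct, star_smul, smul_dotProduct]

lemma inn_smul_right (c : ℂ) (v w : ι → ℂ) : inn v (c • w) = c * inn v w := by
  simp [inn_eq_star_dotProduct]

lemma inn_add_right (v w w' : ι → ℂ) : inn v (w + w') = inn v w + inn v w' := by
  simp [inn_eq_star_dotProduct, dotProduct_add]

lemma inn_sub_right (v w w' : ι → ℂ) : inn v (w - w') = inn v w - inn v w' := by
  simp [inn_eq_star_dotProduct, dotProduct_sub]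

lemma inn_mulVec_mulVec (M : Matrix ι ι ℂ) (v w : ι → ℂ) :
    inn (M *ᵥ v) (M *ᵥ w) = inn v ((Mᴴ * M) *ᵥ w) := by
  rw [inn_eq_star_dotProduct, inn_eq_star_dotProduct, star_mulVec, dotProduct_mulVec,
    vecMul_vecMul, ← dotProduct_mulVec]

variable [DecidableEq ι]

lemma sum_conj_inn_mul_inn_of_orthonormal {f : ι → ι → ℂ}
    (hf : ∀ i i', inn (f i) (f i') = if i = i' then 1 else 0) (v w : ι → ℂ) :
    ∑ i, conj (inn (f i) v) * inn (f i) w = inn v w := by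
  set U : Matrix ι ι ℂ := Matrix.of fun i x => conj (f i x)
  have hUv : ∀ x, U *ᵥ x = fun i => inn (f i) x := fun x => rfl
  have hUU : U * Uᴴ = 1 := by
    ext i i'
    simpa [U, mul_apply, inn, one_apply, mul_comm] using hf i i'
  calc ∑ i, conj (inn (f i) v) * inn (f i) w = inn (U *ᵥ v) (U *ᵥ w) := by simp [hUv, inn]
    _ = inn v w := by rw [inn_mulVec_mulVec, mul_eq_one_comm.1 hUU, one_mulVec]

lemma sum_normSq_inn_of_orthonormal {f : ι → ι → ℂ}
    (hf : ∀ i i', inn (f i) (f i') = if i = i' then 1 else 0) (v : ι → ℂ) :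
    ∑ i, Complex.normSq (inn (f i) v) = nsq v := by
  have h := sum_conj_inn_mul_inn_of_orthonormal hf v v
  rw [inn_self] at h
  exact_mod_cast (by simpa [Complex.normSq_eq_conj_mul_self] using h :
    (∑ i, (Complex.normSq (inn (f i) v) : ℂ)) = nsq v)

end InnerProduct

section Outer

variable {α ι : Type*}

lemma outer_mulVec [Fintype α] (v w u : α → ℂ) : outer v w *ᵥ u = inn w u • v := by
  ext x
  simp only [outer, mulVec, dotProduct, inn, Pi.smul_apply, smul_eq_mul, Finset.sum_mul]
  exact Finset.sum_congr rfl fun _ _ => by ring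

lemma conjTranspose_outer (v w : α → ℂ) : (outer v w)ᴴ = outer w v := by
  ext x y; simp [outer, mul_comm]

lemma mul_outer_mul_conjTranspose [Fintype α] (M N : Matrix α α ℂ) (v w : α → ℂ) :
    M * outer v w * Nᴴ = outer (M *ᵥ v) (N *ᵥ w) := by
  ext x y
  simp only [mul_apply, outer, conjTranspose_apply, mulVec, dotProduct, Finset.sum_mul,
    Finset.mul_sum, map_sum, map_mul, Complex.star_def]
  exact Finset.sum_congr rfl fun _ _ => Finset.sum_congr rfl fun _ _ => by ring

lemma outer_mul_outer [Fintype α] (v w x y : α → ℂ) :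
    outer v w * outer x y = inn w x • outer v y := by
  ext s t
  simp only [mul_apply, outer, Matrix.smul_apply, inn, smul_eq_mul, Finset.sum_mul]
  exact Finset.sum_congr rfl fun _ _ => by ring

lemma trace_mul_outer [Fintype α] (Q : Matrix α α ℂ) (v w : α → ℂ) :
    (Q * outer v w).trace = inn w (Q *ᵥ v) := by
  simp only [trace, diag_apply, mul_apply, outer, inn, mulVec, dotProduct, Finset.mul_sum]
  exact Finset.sum_congr rfl fun _ _ => Finset.sum_congr rfl fun _ _ => by ring

lemma outer_vtens (v v' : α → ℂ) (w w' : ι → ℂ) :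
    outer (vtens v w) (vtens v' w') = outer v v' ⊗ₖ outer w w' := by
  ext ⟨s, u⟩ ⟨t, u'⟩
  simp [outer, vtens]
  ring

lemma ptraceNoise_outer_vtens [Fintype ι] (v : α → ℂ) (w : ι → ℂ) :
    ptraceNoise (outer (vtens v w) (vtens v w)) = (nsq w : ℂ) • outer v v := by
  ext s t
  simp only [ptraceNoise, outer, vtens, Matrix.smul_apply, smul_eq_mul, ← inn_self, inn,
    Finset.sum_mul, map_mul]
  exact Finset.sum_congr rfl fun _ _ => by ring

lemma tmap_outer [Fintype α] [Fintype ι] (V : Matrix (α × ι) (α × ι) ℂ) (χ : ι → ℂ)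
    (w : α → ℂ) :
    tmap V χ (outer w w) = ptraceNoise (outer (V *ᵥ vtens w χ) (V *ᵥ vtens w χ)) := by
  rw [tmap, ← outer_vtens, mul_outer_mul_conjTranspose]

lemma tmap_outer_of_mulVec_vtens_eq [Fintype α] [Fintype ι] {V : Matrix (α × ι) (α × ι) ℂ}
    {ψ : α → ℂ} {χ : ι → ℂ} (hχ : nsq χ = 1) (hV : V *ᵥ vtens ψ χ = vtens ψ χ) :
    tmap V χ (outer ψ ψ) = outer ψ ψ := by
  rw [tmap_outer, hV, ptraceNoise_outer_vtens, hχ, Complex.ofReal_one, one_smul]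

variable [Fintype α] [Fintype ι]

/-- `tmap V χ`, bundled so that composites of transition operators are products in
`Module.End`. -/
def transferOp (V : Matrix (α × ι) (α × ι) ℂ) (χ : ι → ℂ) : Module.End ℂ (Matrix α α ℂ) where
  toFun := tmap V χ
  map_add' A B := by
    ext s t
    simp [tmap, ptraceNoise, add_kronecker, Matrix.mul_add, Matrix.add_mul,
      Finset.sum_add_distrib]
  map_smul' c A := by
    ext s t
    simp [tmap, ptraceNoise, smul_kronecker, Finset.mul_sum]

@[simp]
lemma transferOp_apply (V : Matrix (α × ι) (α × ι) ℂ) (χ : ι → ℂ) (ρ : Matrix α α ℂ) :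
    transferOp V χ ρ = tmap V χ ρ := rfl

end Outer

section Kraus

variable {α ι : Type*} [Fintype ι]

lemma kraus_mulVec_apply [Fintype α] (V : Matrix (α × ι) (α × ι) ℂ) (f χ : ι → ℂ) (w : α → ℂ)
    (s : α) :
    (kraus V f χ *ᵥ w) s = inn f (fun u => (V *ᵥ vtens w χ) (s, u)) := by
  simp only [mulVec, dotProduct, kraus, inn, vtens, Finset.sum_mul, Finset.mul_sum,
    Fintype.sum_prod_type]
  rw [Finset.sum_comm]
  exact Finset.sum_congr rfl fun _ _ => Finset.sum_congr rfl fun _ _ =>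
    Finset.sum_congr rfl fun _ _ => by ring

lemma kraus_mulVec_of_mulVec_vtens_eq [Fintype α] {V : Matrix (α × ι) (α × ι) ℂ} {ψ : α → ℂ}
    {χ : ι → ℂ} (hV : V *ᵥ vtens ψ χ = vtens ψ χ) (f : ι → ℂ) :
    kraus V f χ *ᵥ ψ = inn f χ • ψ := by
  ext s
  simp only [kraus_mulVec_apply, hV, inn, vtens, Pi.smul_apply, smul_eq_mul, Finset.sum_mul]
  exact Finset.sum_congr rfl fun _ _ => by ring

lemma sum_outer_kraus_mulVec [Fintype α] [DecidableEq ι] (V : Matrix (α × ι) (α × ι) ℂ)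
    (χ : ι → ℂ) {f : ι → ι → ℂ} (hf : ∀ i i', inn (f i) (f i') = if i = i' then 1 else 0)
    (w : α → ℂ) :
    ∑ i, outer (kraus V (f i) χ *ᵥ w) (kraus V (f i) χ *ᵥ w) = tmap V χ (outer w w) := by
  ext s t
  simp only [tmap_outer, Matrix.sum_apply, outer, kraus_mulVec_apply, ptraceNoise]
  have h := congrArg conj (sum_conj_inn_mul_inn_of_orthonormal hf
    (fun u => (V *ᵥ vtens w χ) (s, u)) (fun u => (V *ᵥ vtens w χ) (t, u)))
  simp only [map_sum, map_mul, Complex.conj_conj, inn] at h ⊢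
  rw [← h]

lemma hasDerivAt_kraus_apply {W : ℝ → Matrix (α × ι) (α × ι) ℂ}
    {Wd : Matrix (α × ι) (α × ι) ℂ} {θ0 : ℝ}
    (hWd : ∀ p q, HasDerivAt (fun θ => W θ p q) (Wd p q) θ0) (f χ : ι → ℂ) (s t : α) :
    HasDerivAt (fun θ => kraus (W θ) f χ s t) (kraus Wd f χ s t) θ0 := by
  unfold kraus
  exact HasDerivAt.fun_sum fun u _ => HasDerivAt.fun_sum fun v _ =>
    ((hWd (s, u) (t, v)).const_mul (conj (f u))).mul_const (χ v)

end Kraus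

section OrderedProduct

variable {M : Type*} [Monoid M]

lemma List.prod_reverse_ofFn_succ' {n : ℕ} (f : Fin (n + 1) → M) :
    (List.ofFn f).reverse.prod
      = f (Fin.last n) * (List.ofFn fun i => f i.castSucc).reverse.prod := by
  rw [List.ofFn_succ', List.concat_eq_append, List.reverse_append, List.reverse_singleton,
    List.singleton_append, List.prod_cons]

lemma List.prod_reverse_ofFn_update_const {n : ℕ} (a b : M) (m : Fin n) :
    (List.ofFn (Function.update (fun _ => a) m b)).reverse.prod
      = a ^ (m.rev : ℕ) * b * a ^ (m : ℕ) := by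
  induction n with
  | zero => exact m.elim0
  | succ n ih =>
    rw [List.prod_reverse_ofFn_succ']
    induction m using Fin.lastCases with
    | last => simp [List.ofFn_const]
    | cast m =>
      have hcomp : (fun i : Fin n => Function.update (fun _ => a) m.castSucc b i.castSucc)
          = Function.update (fun _ => a) m b :=
        Function.update_comp_eq_of_injective _ (Fin.castSucc_injective n) m b
      rw [hcomp, ih, Function.update_of_ne (Fin.castSucc_ne_last m).symm, Fin.rev_castSucc,
        Fin.val_succ, Fin.val_castSucc, pow_succ', mul_assoc, mul_assoc, mul_assoc]

end OrderedProduct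

section KrausProduct

variable {α : Type*} [Fintype α]

lemma hasDerivAt_mulVec_apply {θ0 : ℝ} {B : ℝ → Matrix α α ℂ} {B' : Matrix α α ℂ}
    {w : ℝ → α → ℂ} {w' : α → ℂ} (hB : ∀ s t, HasDerivAt (fun θ => B θ s t) (B' s t) θ0)
    (hw : ∀ t, HasDerivAt (fun θ => w θ t) (w' t) θ0) (s : α) :
    HasDerivAt (fun θ => (B θ *ᵥ w θ) s) ((B' *ᵥ w θ0 + B θ0 *ᵥ w') s) θ0 := by
  simp only [mulVec, dotProduct, Pi.add_apply, ← Finset.sum_add_distrib]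
  exact HasDerivAt.fun_sum fun t _ => (hB s t).fun_mul (hw t)

variable [DecidableEq α]

lemma kprodFin_succ' {n : ℕ} (A : Fin (n + 1) → Matrix α α ℂ) :
    kprodFin A = A (Fin.last n) * kprodFin fun i => A i.castSucc :=
  List.prod_reverse_ofFn_succ' A

lemma kprodFin_mulVec_of_mulVec_eq_smul {ψ : α → ℂ} :
    ∀ {n : ℕ} {A : Fin n → Matrix α α ℂ} {c : Fin n → ℂ},
      (∀ j, A j *ᵥ ψ = c j • ψ) → kprodFin A *ᵥ ψ = (∏ j, c j) • ψ
  | 0, _, _, _ => by simp [kprodFin]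
  | n + 1, A, c, hA => by
    rw [kprodFin_succ', ← mulVec_mulVec,
      kprodFin_mulVec_of_mulVec_eq_smul fun j => hA j.castSucc, mulVec_smul, hA, smul_smul,
      Fin.prod_univ_castSucc, mul_comm]

lemma hasDerivAt_kprodFin_mulVec_apply {θ0 : ℝ} (v : α → ℂ) :
    ∀ {n : ℕ} {A : ℝ → Fin n → Matrix α α ℂ} {A' : Fin n → Matrix α α ℂ},
      (∀ j s t, HasDerivAt (fun θ => A θ j s t) (A' j s t) θ0) → ∀ x,
      HasDerivAt (fun θ => (kprodFin (A θ) *ᵥ v) x)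
        ((∑ m, kprodFin (Function.update (A θ0) m (A' m)) *ᵥ v) x) θ0
  | 0, A, A', _, x => by simpa [kprodFin] using hasDerivAt_const θ0 (v x)
  | n + 1, A, A', hA, x => by
    have ih := hasDerivAt_kprodFin_mulVec_apply v (A := fun θ j => A θ j.castSucc)
      (A' := fun j => A' j.castSucc) fun j => hA j.castSucc
    convert hasDerivAt_mulVec_apply (hA (Fin.last n)) ih x using 1
    · simp only [kprodFin_succ', ← mulVec_mulVec]
    · simp only [kprodFin_succ', ← mulVec_mulVec, Fin.sum_univ_castSucc, Function.update_apply,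
        Fin.castSucc_inj, Fin.castSucc_ne_last, (Fin.castSucc_ne_last _).symm, if_true, if_false,
        ← mulVec_sum]
      have hupd : ∀ m : Fin n,
          Function.update (fun i : Fin n => A θ0 i.castSucc) m (A' m.castSucc)
            = fun i => if i = m then A' m.castSucc else A θ0 i.castSucc :=
        fun m => funext fun i => Function.update_apply _ _ _ _
      simp only [hupd, add_comm]

lemma sum_outer_kprodFin_kraus_mulVec {ι : Type*} [Fintype ι] [DecidableEq ι] (χ : ι → ℂ)
    (v : α → ℂ) :
    ∀ {n : ℕ} (V : Fin n → Matrix (α × ι) (α × ι) ℂ) (e : Fin n → (Fin n → ι) → ι → ι → ℂ),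
      (∀ j g g', (∀ l, l < j → g l = g' l) → e j g = e j g') →
      (∀ j g i i', inn (e j g i) (e j g i') = if i = i' then 1 else 0) →
      ∑ g, outer (kprodFin (fun j => kraus (V j) (e j g (g j)) χ) *ᵥ v)
          (kprodFin (fun j => kraus (V j) (e j g (g j)) χ) *ᵥ v)
        = (List.ofFn fun j => transferOp (V j) χ).reverse.prod (outer v v)
  | 0, V, e, _, _ => by simp [kprodFin]
  | n + 1, V, e, hadapt, honb => by
    rw [List.prod_reverse_ofFn_succ', Module.End.mul_apply]
    -- Sum over the last outcome first: its basis depends only on the earlier outcomes.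
    rcases isEmpty_or_nonempty ι with _ | ⟨⟨x0⟩⟩
    · ext s t
      simp [tmap, ptraceNoise]
    have hsnoc : ∀ (g : Fin n → ι) x j, e j (Fin.snoc g x) = e j (Fin.snoc g x0) :=
      fun g x j => hadapt j _ _ fun l hl => by
        obtain ⟨l, rfl⟩ :=
          Fin.exists_castSucc_eq.2 (ne_of_lt (lt_of_lt_of_le hl (Fin.le_last j)))
        simp only [Fin.snoc_castSucc]
    set e' : Fin n → (Fin n → ι) → ι → ι → ℂ := fun j g => e j.castSucc (Fin.snoc g x0)
    have hadapt' : ∀ j g g', (∀ l, l < j → g l = g' l) → e' j g = e' j g' :=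
      fun j g g' h => hadapt _ _ _ fun l hl => by
        obtain ⟨l, rfl⟩ :=
          Fin.exists_castSucc_eq.2 (ne_of_lt (lt_trans hl (Fin.castSucc_lt_last j)))
        simpa only [Fin.snoc_castSucc] using h l (Fin.castSucc_lt_castSucc_iff.1 hl)
    have hprod : ∀ (g : Fin n → ι) x,
        kprodFin (fun j => kraus (V j) (e j (Fin.snoc g x) (Fin.snoc (α := fun _ => ι) g x j)) χ)
          = kraus (V (Fin.last n)) (e (Fin.last n) (Fin.snoc g x0) x) χ
            * kprodFin (fun j => kraus (V j.castSucc) (e' j g (g j)) χ) := by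
      intro g x
      simp only [kprodFin_succ', hsnoc, Fin.snoc_last, Fin.snoc_castSucc, e']
    rw [← sum_outer_kprodFin_kraus_mulVec χ v (fun j => V j.castSucc) e' hadapt'
      fun j g => honb j.castSucc _, map_sum,
      ← (Fin.snocEquiv fun _ => ι).sum_comp, Fintype.sum_prod_type, Finset.sum_comm]
    refine Finset.sum_congr rfl fun g _ => ?_
    have hsnocEquiv : ⇑(Fin.snocEquiv fun _ => ι)
        = fun p : ι × (Fin n → ι) => Fin.snoc (α := fun _ => ι) p.2 p.1 := rfl
    simp only [hsnocEquiv, hprod, ← mulVec_mulVec, transferOp_apply]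
    exact sum_outer_kraus_mulVec _ χ (honb _ _) _

end KrausProduct

section Estimates

lemma sum_nsq_sum_le_sq_sum_sqrt {κ G X : Type*} [Fintype G] [Fintype X] (s : Finset κ)
    (z : κ → G → X → ℂ) :
    ∑ g, nsq (∑ m ∈ s, z m g) ≤ (∑ m ∈ s, √(∑ g, nsq (z m g))) ^ 2 := by
  let Y : κ → EuclideanSpace ℂ (G × X) := fun m => WithLp.toLp 2 fun p => z m p.1 p.2
  have hnorm_sq : ∀ f : G → X → ℂ,
      ‖(WithLp.toLp 2 fun p : G × X => f p.1 p.2 : EuclideanSpace ℂ (G × X))‖ ^ 2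
        = ∑ g, nsq (f g) := fun f => by
    simp [EuclideanSpace.norm_sq_eq, Fintype.sum_prod_type, nsq, Complex.sq_norm]
  have hsum : ∑ m ∈ s, Y m = WithLp.toLp 2 fun p => (∑ m ∈ s, z m p.1) p.2 := by
    ext p; simp [Y]
  have hY : ∀ m, ‖Y m‖ = √(∑ g, nsq (z m g)) := fun m => by
    rw [← hnorm_sq, Real.sqrt_sq (norm_nonneg _)]
  rw [← hnorm_sq, ← hsum]
  simp only [← hY]
  exact pow_le_pow_left₀ (norm_nonneg _) (norm_sum_le _ _) 2

lemma sum_pow_rev_le_inv_one_sub {a : ℝ} (ha0 : 0 ≤ a) (ha1 : a < 1) (n : ℕ) :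
    ∑ m : Fin n, a ^ (m.rev : ℕ) ≤ (1 - a)⁻¹ := by
  calc ∑ m : Fin n, a ^ (m.rev : ℕ) = ∑ m : Fin n, a ^ (m : ℕ) :=
        Equiv.sum_comp Fin.revPerm fun m => a ^ (m : ℕ)
    _ ≤ (1 - a)⁻¹ := by
      rw [Fin.sum_univ_eq_sum_range (fun i => a ^ i) n, Finset.range_eq_Ico]
      simpa using geom_sum_Ico_le_of_lt_one (m := 0) (n := n) ha0 ha1

end Estimates

section OutputBound

variable {α ι : Type*} [Fintype α] [DecidableEq α] [Fintype ι]

/-- The derivative of the conditional system vector `K_{g_{n-1}} ⋯ K_{g_0} ψ` of the record `g`,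
by the Leibniz rule. -/
def condStateDeriv (V Vd : Matrix (α × ι) (α × ι) ℂ) (χ : ι → ℂ) {n : ℕ}
    (e : Fin n → (Fin n → ι) → ι → ι → ℂ) (ψ : α → ℂ) (g : Fin n → ι) : α → ℂ :=
  ∑ m, kprodFin (Function.update (fun j => kraus V (e j g (g j)) χ) m (kraus Vd (e m g (g m)) χ))
    *ᵥ ψ

lemma hasDerivAt_kprodFin_kraus_mulVec_apply {W : ℝ → Matrix (α × ι) (α × ι) ℂ}
    {Wd : Matrix (α × ι) (α × ι) ℂ} {θ0 : ℝ}
    (hWd : ∀ p q, HasDerivAt (fun θ => W θ p q) (Wd p q) θ0) (χ : ι → ℂ) {n : ℕ}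
    (e : Fin n → (Fin n → ι) → ι → ι → ℂ) (ψ : α → ℂ) (g : Fin n → ι) (x : α) :
    HasDerivAt (fun θ => (kprodFin (fun j => kraus (W θ) (e j g (g j)) χ) *ᵥ ψ) x)
      (condStateDeriv (W θ0) Wd χ e ψ g x) θ0 :=
  hasDerivAt_kprodFin_mulVec_apply ψ (fun _ => hasDerivAt_kraus_apply hWd _ χ) x

lemma nsq_proj_mulVec {ψ : α → ℂ} (hψ : nsq ψ = 1) (y : α → ℂ) :
    nsq ((1 - outer ψ ψ) *ᵥ y) = ((1 - outer ψ ψ) * outer y y).trace.re := by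
  have hP : outer ψ ψ * outer ψ ψ = outer ψ ψ := by
    rw [outer_mul_outer, inn_self, hψ, Complex.ofReal_one, one_smul]
  have hQ : (1 - outer ψ ψ)ᴴ * (1 - outer ψ ψ) = 1 - outer ψ ψ := by
    rw [conjTranspose_sub, conjTranspose_one, conjTranspose_outer, sub_mul, mul_sub, mul_sub,
      hP, Matrix.one_mul, Matrix.mul_one, Matrix.one_mul]
    abel
  calc nsq ((1 - outer ψ ψ) *ᵥ y)
        = (inn ((1 - outer ψ ψ) *ᵥ y) ((1 - outer ψ ψ) *ᵥ y)).re := by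
        rw [inn_self, Complex.ofReal_re]
    _ = ((1 - outer ψ ψ) * outer y y).trace.re := by
        rw [inn_mulVec_mulVec, hQ, trace_mul_outer]

variable [DecidableEq ι]

lemma sum_outer_kprodFin_update_kraus_mulVec {V Vd : Matrix (α × ι) (α × ι) ℂ} {ψ : α → ℂ}
    {χ : ι → ℂ} (hV : tmap V χ (outer ψ ψ) = outer ψ ψ) {n : ℕ}
    {e : Fin n → (Fin n → ι) → ι → ι → ℂ}
    (hadapt : ∀ j g g', (∀ l, l < j → g l = g' l) → e j g = e j g')
    (honb : ∀ j g i i', inn (e j g i) (e j g i') = if i = i' then 1 else 0) (m : Fin n) :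
    ∑ g, outer
        (kprodFin (Function.update (fun j => kraus V (e j g (g j)) χ) m (kraus Vd (e m g (g m)) χ))
          *ᵥ ψ)
        (kprodFin (Function.update (fun j => kraus V (e j g (g j)) χ) m (kraus Vd (e m g (g m)) χ))
          *ᵥ ψ)
      = (transferOp V χ ^ (m.rev : ℕ)) (tmap Vd χ (outer ψ ψ)) := by
  have hupd : ∀ g : Fin n → ι,
      Function.update (fun j => kraus V (e j g (g j)) χ) m (kraus Vd (e m g (g m)) χ)
        = fun j => kraus (Function.update (fun _ => V) m Vd j) (e j g (g j)) χ :=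
    fun g => funext fun j =>
      (Function.apply_update (fun j W => kraus W (e j g (g j)) χ) _ m Vd j).symm
  have hops : (fun j => transferOp (Function.update (fun _ => V) m Vd j) χ)
      = Function.update (fun _ => transferOp V χ) m (transferOp Vd χ) :=
    funext fun j => Function.apply_update (fun _ W => transferOp W χ) _ m Vd j
  have hfix : ((transferOp V χ) ^ (m : ℕ)) (outer ψ ψ) = outer ψ ψ := by
    rw [Module.End.pow_apply]
    exact Function.iterate_fixed hV _
  simp only [hupd]
  rw [sum_outer_kprodFin_kraus_mulVec χ ψ _ e hadapt honb, hops,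
    List.prod_reverse_ofFn_update_const, Module.End.mul_apply, Module.End.mul_apply, hfix,
    transferOp_apply]

lemma sum_nsq_proj_condStateDeriv_le {V Vd : Matrix (α × ι) (α × ι) ℂ} {ψ : α → ℂ}
    {χ : ι → ℂ} (hψ : nsq ψ = 1) (hV : tmap V χ (outer ψ ψ) = outer ψ ψ) {a : ℝ}
    (ha0 : 0 ≤ a) (ha1 : a < 1)
    (hgap : ∀ m : ℕ,
      ((1 - outer ψ ψ) * (tmap V χ)^[m] (tmap Vd χ (outer ψ ψ))).trace.re ≤ a ^ (2 * m))
    {n : ℕ} {e : Fin n → (Fin n → ι) → ι → ι → ℂ}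
    (hadapt : ∀ j g g', (∀ l, l < j → g l = g' l) → e j g = e j g')
    (honb : ∀ j g i i', inn (e j g i) (e j g i') = if i = i' then 1 else 0) :
    ∑ g, nsq ((1 - outer ψ ψ) *ᵥ condStateDeriv V Vd χ e ψ g) ≤ (1 - a)⁻¹ ^ 2 := by
  have hslot : ∀ m : Fin n, √(∑ g, nsq ((1 - outer ψ ψ) *ᵥ
      kprodFin (Function.update (fun j => kraus V (e j g (g j)) χ) m (kraus Vd (e m g (g m)) χ))
        *ᵥ ψ)) ≤ a ^ (m.rev : ℕ) := fun m => by
    rw [Real.sqrt_le_left (pow_nonneg ha0 _), ← pow_mul']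
    simp only [nsq_proj_mulVec hψ]
    rw [← Complex.re_sum, ← trace_sum, ← Finset.mul_sum,
      sum_outer_kprodFin_update_kraus_mulVec hV hadapt honb, Module.End.pow_apply]
    exact hgap _
  calc _ = ∑ g, nsq (∑ m, (1 - outer ψ ψ) *ᵥ
        kprodFin (Function.update (fun j => kraus V (e j g (g j)) χ) m (kraus Vd (e m g (g m)) χ))
          *ᵥ ψ) := by simp only [condStateDeriv, mulVec_sum]
    _ ≤ _ := sum_nsq_sum_le_sq_sum_sqrt _ _
    _ ≤ (∑ m : Fin n, a ^ (m.rev : ℕ)) ^ 2 :=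
        pow_le_pow_left₀ (Finset.sum_nonneg fun _ _ => Real.sqrt_nonneg _)
          (Finset.sum_le_sum fun m _ => hslot m) 2
    _ ≤ (1 - a)⁻¹ ^ 2 :=
        pow_le_pow_left₀ (Finset.sum_nonneg fun _ _ => pow_nonneg ha0 _)
          (sum_pow_rev_le_inv_one_sub ha0 ha1 n) 2

end OutputBound

section FisherInformation

lemma sum_filter_ne_zero_inv_mul_sq {X : Type*} (s : Finset X) (r t : X → ℝ) :
    ∑ x ∈ s with r x ≠ 0, (r x)⁻¹ * t x ^ 2 = ∑ x ∈ s, (r x)⁻¹ * t x ^ 2 :=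
  Finset.sum_filter_of_ne fun _ _ h hr => h (by rw [hr, _root_.inv_zero, zero_mul])

lemma inv_normSq_mul_sq_le (a w : ℂ) (s : ℝ) :
    (Complex.normSq a)⁻¹ * (2 * (Complex.normSq a * s + (conj a * w).re)) ^ 2
      ≤ 4 * Complex.normSq a * s ^ 2 + 8 * s * (conj a * w).re + 4 * Complex.normSq w := by
  rcases eq_or_ne a 0 with rfl | ha
  · simpa using mul_nonneg zero_le_four (Complex.normSq_nonneg w)
  have hA : 0 < Complex.normSq a := Complex.normSq_pos.2 ha
  have hr : (conj a * w).re ^ 2 ≤ Complex.normSq a * Complex.normSq w := by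
    simpa [sq, Complex.normSq_mul] using Complex.re_sq_le_normSq (conj a * w)
  rw [inv_mul_le_iff₀ hA]
  nlinarith

variable {α : Type*} [Fintype α] {θ0 : ℝ} {v : ℝ → α → ℂ} {u : α → ℂ}

lemma hasDerivAt_normSq {f : ℝ → ℂ} {f' : ℂ} {x : ℝ} (hf : HasDerivAt f f' x) :
    HasDerivAt (fun t => Complex.normSq (f t)) (2 * (conj (f x) * f').re) x := by
  simpa [Complex.normSq_eq_norm_sq, Complex.inner, mul_comm] using hf.norm_sq

lemma hasDerivAt_inn_right (w : α → ℂ) (hv : ∀ x, HasDerivAt (fun θ => v θ x) (u x) θ0) :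
    HasDerivAt (fun θ => inn w (v θ)) (inn w u) θ0 :=
  HasDerivAt.fun_sum fun x _ => (hv x).const_mul _

lemma hasDerivAt_nsq (hv : ∀ x, HasDerivAt (fun θ => v θ x) (u x) θ0) :
    HasDerivAt (fun θ => nsq (v θ)) (2 * (inn (v θ0) u).re) θ0 := by
  simpa [nsq, inn, Complex.re_sum, Finset.mul_sum] using
    HasDerivAt.fun_sum fun x (_ : x ∈ Finset.univ) => hasDerivAt_normSq (hv x)

lemma re_conj_inn_smul_mul_inn_eq {ψ u w : α → ℂ} (f : α → ℂ) {lam c : ℂ} (hu : u = c • ψ + w)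
    {s : ℝ} (hs : Complex.normSq lam * s = (conj lam * c).re) :
    (conj (inn f (lam • ψ)) * inn f u).re
      = Complex.normSq (inn f (lam • ψ)) * s + (conj (inn f (lam • ψ)) * inn f w).re := by
  have hsplit : conj (lam * inn f ψ) * (c * inn f ψ + inn f w)
      = conj lam * c * (Complex.normSq (inn f ψ) : ℂ) + conj (lam * inn f ψ) * inn f w := by
    rw [Complex.normSq_eq_conj_mul_self, map_mul]
    ring
  simp only [hu, inn_add_right, inn_smul_right]
  rw [hsplit, Complex.add_re, Complex.re_mul_ofReal, Complex.normSq_mul,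
    mul_comm (Complex.normSq lam), mul_assoc, hs]
  ring

variable [DecidableEq α]

/-- Measuring a state proportional to `ψ` in a basis `es` gains at most `4‖w‖²` Fisher
information over its norm, `w` being the part of its derivative `u` orthogonal to `ψ`. -/
lemma sum_inv_normSq_mul_sq_sub_le {ψ : α → ℂ} (hψ : nsq ψ = 1) {es : α → α → ℂ}
    (hes : ∀ i i', inn (es i) (es i') = if i = i' then 1 else 0) (lam c : ℂ) {u w : α → ℂ}
    (hu : u = c • ψ + w) (hw : inn ψ w = 0) :
    ∑ i, (Complex.normSq (inn (es i) (lam • ψ)))⁻¹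
        * (2 * (conj (inn (es i) (lam • ψ)) * inn (es i) u).re) ^ 2
      - (nsq (lam • ψ))⁻¹ * (2 * (inn (lam • ψ) u).re) ^ 2 ≤ 4 * nsq w := by
  obtain ⟨s, hs⟩ : ∃ s : ℝ, Complex.normSq lam * s = (conj lam * c).re := by
    rcases eq_or_ne lam 0 with rfl | hlam
    · exact ⟨0, by simp⟩
    exact ⟨(conj lam * c).re / Complex.normSq lam,
      mul_div_cancel₀ _ (Complex.normSq_pos.2 hlam).ne'⟩
  have hterm := fun i => re_conj_inn_smul_mul_inn_eq (es i) hu hs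
  have hnorm : ∑ i, Complex.normSq (inn (es i) (lam • ψ)) = Complex.normSq lam := by
    rw [sum_normSq_inn_of_orthonormal hes, nsq_smul, hψ, mul_one]
  have hcross : ∑ i, (conj (inn (es i) (lam • ψ)) * inn (es i) w).re = 0 := by
    rw [← Complex.re_sum, sum_conj_inn_mul_inn_of_orthonormal hes, inn_smul_left, hw, mul_zero,
      Complex.zero_re]
  have hnorm_sq : (nsq (lam • ψ))⁻¹ * (2 * (inn (lam • ψ) u).re) ^ 2
      = 4 * Complex.normSq lam * s ^ 2 := by
    rw [nsq_smul, hψ, mul_one, inn_smul_left, hu, inn_add_right, inn_smul_right, inn_self, hψ,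
      hw, Complex.ofReal_one, mul_one, add_zero, ← hs]
    rcases eq_or_ne (Complex.normSq lam) 0 with hP | hP
    · simp [hP]
    · field_simp
      ring
  calc _ = ∑ i, (Complex.normSq (inn (es i) (lam • ψ)))⁻¹
          * (2 * (Complex.normSq (inn (es i) (lam • ψ)) * s
            + (conj (inn (es i) (lam • ψ)) * inn (es i) w).re)) ^ 2
        - 4 * Complex.normSq lam * s ^ 2 := by simp only [hterm, hnorm_sq]
    _ ≤ ∑ i, (4 * Complex.normSq (inn (es i) (lam • ψ)) * s ^ 2
          + 8 * s * (conj (inn (es i) (lam • ψ)) * inn (es i) w).re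
          + 4 * Complex.normSq (inn (es i) w)) - 4 * Complex.normSq lam * s ^ 2 := by
        gcongr with i
        exact inv_normSq_mul_sq_le _ _ s
    _ = 4 * nsq w := by
        simp only [Finset.sum_add_distrib, ← Finset.mul_sum, ← Finset.sum_mul, hnorm, hcross,
          sum_normSq_inn_of_orthonormal hes]
        ring

lemma proj_mulVec (ψ w : α → ℂ) : (1 - outer ψ ψ) *ᵥ w = w - inn ψ w • ψ := by
  rw [sub_mulVec, one_mulVec, outer_mulVec]

lemma sum_inv_mul_sq_sub_inv_mul_sq_le {ψ : α → ℂ} (hψ : nsq ψ = 1) {es : α → α → ℂ}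
    (hes : ∀ i i', inn (es i) (es i') = if i = i' then 1 else 0)
    (hv : ∀ x, HasDerivAt (fun θ => v θ x) (u x) θ0) {lam : ℂ} (hvψ : v θ0 = lam • ψ) {pd : ℝ}
    (hpd : HasDerivAt (fun θ => nsq (v θ)) pd θ0) {qd : α → ℝ}
    (hqd : ∀ i, HasDerivAt (fun θ => nsq (outer (es i) (es i) *ᵥ v θ)) (qd i) θ0) :
    ∑ i, (nsq (outer (es i) (es i) *ᵥ v θ0))⁻¹ * qd i ^ 2 - (nsq (v θ0))⁻¹ * pd ^ 2
      ≤ 4 * nsq ((1 - outer ψ ψ) *ᵥ u) := by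
  have hq : ∀ θ i, nsq (outer (es i) (es i) *ᵥ v θ) = Complex.normSq (inn (es i) (v θ)) := by
    intro θ i
    have hesi : (nsq (es i) : ℂ) = 1 := by rw [← inn_self, hes, if_pos rfl]
    rw [outer_mulVec, nsq_smul, Complex.ofReal_eq_one.1 hesi, mul_one]
  have hqd' : ∀ i, qd i = 2 * (conj (inn (es i) (v θ0)) * inn (es i) u).re := fun i =>
    (hqd i).unique (by simpa only [hq] using hasDerivAt_normSq (hasDerivAt_inn_right (es i) hv))
  rw [hpd.unique (hasDerivAt_nsq hv)]
  simp only [hq, hqd']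
  rw [hvψ]
  refine sum_inv_normSq_mul_sq_sub_le hψ hes lam (inn ψ u) ?_ ?_
  · rw [proj_mulVec]
    abel
  · rw [proj_mulVec, inn_sub_right, inn_smul_right, inn_self, hψ, Complex.ofReal_one, mul_one,
      sub_self]

end FisherInformation

theorem output_CFI_close_to_QFI_general
    (D k : ℕ) (θ0 : ℝ)
    (W : ℝ → Matrix (Fin D × Fin k) (Fin D × Fin k) ℂ)
    (Wd : Matrix (Fin D × Fin k) (Fin D × Fin k) ℂ)
    (hWd : ∀ p q, HasDerivAt (fun θ => W θ p q) (Wd p q) θ0)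
    (ψ : Fin D → ℂ) (χ : Fin k → ℂ) (hψ : nsq ψ = 1) (hχ : nsq χ = 1)
    -- (i) stationarity of the pure state ψ ⊗ χ
    (hstat : (W θ0).mulVec (vtens ψ χ) = vtens ψ χ)
    -- (iii) exponential convergence to the stationary state on the support of τ
    (a : ℝ) (ha0 : 0 ≤ a) (ha1 : a < 1)
    (τ : Matrix (Fin D) (Fin D) ℂ)
    (hτ : τ = ptraceNoise (outer (Wd.mulVec (vtens ψ χ)) (Wd.mulVec (vtens ψ χ))))
    (hgap : ∀ m : ℕ,
      (((1 - outer ψ ψ) * ((tmap (W θ0) χ)^[m] τ)).trace).re ≤ a ^ (2 * m))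
    -- the quantum Fisher information of the joint pure state model at θ0
    (F : ℕ → ℝ)
    -- the adaptive measurement: bases for each unit, depending on previous outcomes
    (e : (n : ℕ) → Fin n → (Fin n → Fin k) → Fin k → Fin k → ℂ)
    (hadapt : ∀ n (j : Fin n) (g g' : Fin n → Fin k),
      (∀ l : Fin n, l < j → g l = g' l) → e n j g = e n j g')
    (honb : ∀ n (j : Fin n) (g : Fin n → Fin k) (i i' : Fin k),
      inn (e n j g i) (e n j g i') = if i = i' then 1 else 0)
    -- the output likelihood and its derivative
    (p : (n : ℕ) → ℝ → (Fin n → Fin k) → ℝ)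
    (hp : ∀ n θ g, p n θ g =
      nsq ((kprodFin fun j : Fin n => kraus (W θ) (e n j g (g j)) χ).mulVec ψ))
    (pd : (n : ℕ) → (Fin n → Fin k) → ℝ)
    (hpd : ∀ n g, HasDerivAt (fun θ => p n θ g) (pd n g) θ0)
    -- the classical Fisher information of the output measurement record
    (I : ℕ → ℝ)
    (hI : ∀ n, I n =
      ∑ g ∈ Finset.univ.filter (fun g : Fin n → Fin k => p n θ0 g ≠ 0),
        (p n θ0 g)⁻¹ * (pd n g) ^ 2)
    -- the final projective measurement on the system ℂ^D, depending on the outcomes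
    (es : (n : ℕ) → (Fin n → Fin k) → Fin D → Fin D → ℂ)
    (honbs : ∀ n (g : Fin n → Fin k) (i i' : Fin D),
      inn (es n g i) (es n g i') = if i = i' then 1 else 0)
    -- the augmented likelihood (output record together with the final system outcome)
    (q : (n : ℕ) → ℝ → (Fin n → Fin k) → Fin D → ℝ)
    (hq : ∀ n θ g i0, q n θ g i0 =
      nsq ((outer (es n g i0) (es n g i0)).mulVec
        ((kprodFin fun j : Fin n => kraus (W θ) (e n j g (g j)) χ).mulVec ψ)))
    (qd : (n : ℕ) → (Fin n → Fin k) → Fin D → ℝ)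
    (hqd : ∀ n g i0, HasDerivAt (fun θ => q n θ g i0) (qd n g i0) θ0)
    -- optimality: the total classical Fisher information equals the QFI
    (htot : ∀ n : ℕ,
      (∑ x ∈ Finset.univ.filter
          (fun x : (Fin n → Fin k) × Fin D => q n θ0 x.1 x.2 ≠ 0),
        (q n θ0 x.1 x.2)⁻¹ * (qd n x.1 x.2) ^ 2) = F n) :
    ∀ n : ℕ, F n - I n ≤ 4 / (1 - a) ^ 2 := by
  intro n
  have hT : tmap (W θ0) χ (outer ψ ψ) = outer ψ ψ := tmap_outer_of_mulVec_vtens_eq hχ hstat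
  rw [hτ, ← tmap_outer] at hgap
  have hrecord : ∀ g, ∑ i0, (q n θ0 g i0)⁻¹ * qd n g i0 ^ 2 - (p n θ0 g)⁻¹ * pd n g ^ 2
      ≤ 4 * nsq ((1 - outer ψ ψ) *ᵥ condStateDeriv (W θ0) Wd χ (e n) ψ g) := fun g => by
    simp only [hp, hq] at hpd hqd ⊢
    exact sum_inv_mul_sq_sub_inv_mul_sq_le hψ (honbs n g)
      (hasDerivAt_kprodFin_kraus_mulVec_apply hWd χ (e n) ψ g)
      (kprodFin_mulVec_of_mulVec_eq_smul fun j => kraus_mulVec_of_mulVec_vtens_eq hstat _)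
      (hpd n g) (hqd n g)
  rw [← htot n, hI n, sum_filter_ne_zero_inv_mul_sq, sum_filter_ne_zero_inv_mul_sq,
    Fintype.sum_prod_type, ← Finset.sum_sub_distrib]
  calc _ ≤ ∑ g, 4 * nsq ((1 - outer ψ ψ) *ᵥ condStateDeriv (W θ0) Wd χ (e n) ψ g) :=
        Finset.sum_le_sum fun g _ => hrecord g
    _ ≤ 4 * (1 - a)⁻¹ ^ 2 := by
        rw [← Finset.mul_sum]
        gcongr
        exact sum_nsq_proj_condStateDeriv_le hψ hT ha0 ha1 hgap (hadapt n) (honb n)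
    _ = 4 / (1 - a) ^ 2 := by rw [inv_pow, div_eq_mul_inv]

/-- Proposition: QFI is achieved up to a constant by adaptive output
measurements. Under stationarity of `ψ ⊗ χ`, the phase condition
`⟨ψ⊗χ|W*Ẇ|ψ⊗χ⟩ = 0`, and exponential purification `Tr((1-|ψ⟩⟨ψ|) Tᵐ(τ)) ≤ a^{2m}`, if an
adaptive sequential output measurement supplemented by a final measurement of the system
attains the quantum Fisher information `F n` of the joint pure state, then the classical
Fisher information `I n` of the output record alone satisfies `F n - I n ≤ 4/(1-a)²`. -/
theorem output_CFI_close_to_QFI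
    (D k : ℕ) (θ0 : ℝ)
    (W : ℝ → Matrix (Fin D × Fin k) (Fin D × Fin k) ℂ)
    (hWu : ∀ θ, W θ ∈ Matrix.unitaryGroup (Fin D × Fin k) ℂ)
    (Wd : Matrix (Fin D × Fin k) (Fin D × Fin k) ℂ)
    (hWd : ∀ p q, HasDerivAt (fun θ => W θ p q) (Wd p q) θ0)
    (ψ : Fin D → ℂ) (χ : Fin k → ℂ) (hψ : nsq ψ = 1) (hχ : nsq χ = 1)
    -- (i) stationarity of the pure state ψ ⊗ χ
    (hstat : (W θ0).mulVec (vtens ψ χ) = vtens ψ χ)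
    -- (ii) phase condition ⟨ψ⊗χ| W* Ẇ |ψ⊗χ⟩ = 0
    (hphase : inn (vtens ψ χ) (((W θ0)ᴴ * Wd).mulVec (vtens ψ χ)) = 0)
    -- (iii) exponential convergence to the stationary state on the support of τ
    (a : ℝ) (ha0 : 0 ≤ a) (ha1 : a < 1)
    (τ : Matrix (Fin D) (Fin D) ℂ)
    (hτ : τ = ptraceNoise (outer (Wd.mulVec (vtens ψ χ)) (Wd.mulVec (vtens ψ χ))))
    (hgap : ∀ m : ℕ,
      (((1 - outer ψ ψ) * ((tmap (W θ0) χ)^[m] τ)).trace).re ≤ a ^ (2 * m))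
    -- the joint system-output state and its derivative
    (Ψ : (n : ℕ) → ℝ → (Fin D × (Fin n → Fin k)) → ℂ)
    (hΨ : ∀ n θ, Ψ n θ = (steps n (W θ)).mulVec (vtens ψ (vpow n χ)))
    (Ψd : (n : ℕ) → (Fin D × (Fin n → Fin k)) → ℂ)
    (hΨd : ∀ n x, HasDerivAt (fun θ => Ψ n θ x) (Ψd n x) θ0)
    -- the quantum Fisher information of the joint pure state model at θ0
    (F : ℕ → ℝ)
    (hF : ∀ n, F n =
      4 * (nsq (Ψd n) - Complex.normSq (inn (Ψ n θ0) (Ψd n))))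
    -- the adaptive measurement: bases for each unit, depending on previous outcomes
    (e : (n : ℕ) → Fin n → (Fin n → Fin k) → Fin k → Fin k → ℂ)
    (hadapt : ∀ n (j : Fin n) (g g' : Fin n → Fin k),
      (∀ l : Fin n, l < j → g l = g' l) → e n j g = e n j g')
    (honb : ∀ n (j : Fin n) (g : Fin n → Fin k) (i i' : Fin k),
      inn (e n j g i) (e n j g i') = if i = i' then 1 else 0)
    -- the output likelihood and its derivative
    (p : (n : ℕ) → ℝ → (Fin n → Fin k) → ℝ)
    (hp : ∀ n θ g, p n θ g =
      nsq ((kprodFin fun j : Fin n => kraus (W θ) (e n j g (g j)) χ).mulVec ψ))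
    (pd : (n : ℕ) → (Fin n → Fin k) → ℝ)
    (hpd : ∀ n g, HasDerivAt (fun θ => p n θ g) (pd n g) θ0)
    -- the classical Fisher information of the output measurement record
    (I : ℕ → ℝ)
    (hI : ∀ n, I n =
      ∑ g ∈ Finset.univ.filter (fun g : Fin n → Fin k => p n θ0 g ≠ 0),
        (p n θ0 g)⁻¹ * (pd n g) ^ 2)
    -- the final projective measurement on the system ℂ^D, depending on the outcomes
    (es : (n : ℕ) → (Fin n → Fin k) → Fin D → Fin D → ℂ)
    (honbs : ∀ n (g : Fin n → Fin k) (i i' : Fin D),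
      inn (es n g i) (es n g i') = if i = i' then 1 else 0)
    -- the augmented likelihood (output record together with the final system outcome)
    (q : (n : ℕ) → ℝ → (Fin n → Fin k) → Fin D → ℝ)
    (hq : ∀ n θ g i0, q n θ g i0 =
      nsq ((outer (es n g i0) (es n g i0)).mulVec
        ((kprodFin fun j : Fin n => kraus (W θ) (e n j g (g j)) χ).mulVec ψ)))
    (qd : (n : ℕ) → (Fin n → Fin k) → Fin D → ℝ)
    (hqd : ∀ n g i0, HasDerivAt (fun θ => q n θ g i0) (qd n g i0) θ0)
    -- optimality: the total classical Fisher information equals the QFI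
    (htot : ∀ n : ℕ,
      (∑ x ∈ Finset.univ.filter
          (fun x : (Fin n → Fin k) × Fin D => q n θ0 x.1 x.2 ≠ 0),
        (q n θ0 x.1 x.2)⁻¹ * (qd n x.1 x.2) ^ 2) = F n) :
    ∀ n : ℕ, F n - I n ≤ 4 / (1 - a) ^ 2 :=
  output_CFI_close_to_QFI_general D k θ0 W Wd hWd ψ χ hψ hχ hstat a ha0 ha1 τ hτ hgap F e hadapt
    honb p hp pd hpd I hI es honbs q hq qd hqd htot
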